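/- arXiv:2208.02583 — 6 statements merged into one kernel-verified Lean document; each statement's English description precedes it below -/
import Mathlib

section
/- For all natural numbers j and p, the 2p-th derivative of the function x ↦ (cos x)^{2j} evaluated at x = π/2 equals (−4)^{p−j} · ∑_{k=0}^{2j} (−1)^k · C(2j, k) · (j−k)^{2p}, where (−4)^{p−j} denotes the integer power of the nonzero real number −4 with (possibly negative) exponent p − j ∈ ℤ, and C(n,k) denotes the binomial coefficient. -/
/-!
Expanding `(2 cos x) ^ n = (e^{-ix} + e^{ix}) ^ n` by the binomial theorem writes `cos x ^ (2j)` as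
`4⁻ʲ ∑ₖ C(2j, k) cos (2(j - k) x)`, a combination of cosines whose `2p`-th derivatives are
`(-1)ᵖ (2(j - k))²ᵖ cos (2(j - k) x)`. At `x = π / 2` the cosine `cos ((j - k) π)` is the sign `(-1)ʲ⁺ᵏ`,
and collecting the constants `4⁻ʲ (-1)ᵖ 4ᵖ (-1)ʲ` gives `(-4) ^ (p - j)`.
-/

open Real Finset

theorem Real.two_mul_cos_pow (n : ℕ) (x : ℝ) :
    (2 * cos x) ^ n = ∑ k ∈ range (n + 1), (n.choose k : ℝ) * cos (((n : ℝ) - 2 * k) * x) := by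
  have hC : (((2 * cos x) ^ n : ℝ) : ℂ) = ∑ k ∈ range (n + 1),
      ((n.choose k : ℝ) : ℂ) * Complex.exp (↑(((n : ℝ) - 2 * k) * x) * Complex.I) := by
    rw [Complex.ofReal_pow, Complex.ofReal_mul, Complex.ofReal_cos, Complex.ofReal_ofNat,
      Complex.two_cos, add_comm, add_pow]
    refine sum_congr rfl fun k hk => ?_
    have hkn : k ≤ n := Nat.lt_succ_iff.mp (mem_range.mp hk)
    rw [← Complex.exp_nat_mul, ← Complex.exp_nat_mul, ← Complex.exp_add]
    push_cast [hkn]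
    ring_nf
  simpa only [Complex.ofReal_re, Complex.re_sum, Complex.re_ofReal_mul,
    Complex.exp_ofReal_mul_I_re] using congrArg Complex.re hC

theorem Real.iteratedDeriv_even_cos_const_mul (p : ℕ) (a : ℝ) :
    iteratedDeriv (2 * p) (fun x => cos (a * x)) =
      fun x => (-1) ^ p * a ^ (2 * p) * cos (a * x) := by
  rw [iteratedDeriv_comp_const_mul contDiff_cos, iteratedDeriv_even_cos]
  funext x
  simp only [Pi.mul_apply, Pi.pow_apply, Pi.neg_apply, Pi.one_apply]
  ring

theorem Real.iteratedDeriv_even_two_mul_cos_pow (n p : ℕ) (x : ℝ) :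
    iteratedDeriv (2 * p) (fun x => (2 * cos x) ^ n) x =
      (-1) ^ p * ∑ k ∈ range (n + 1),
        (n.choose k : ℝ) * ((n : ℝ) - 2 * k) ^ (2 * p) * cos (((n : ℝ) - 2 * k) * x) := by
  simp_rw [two_mul_cos_pow]
  rw [iteratedDeriv_fun_sum fun k _ => by fun_prop, mul_sum]
  refine sum_congr rfl fun k _ => ?_
  rw [iteratedDeriv_const_mul_field, iteratedDeriv_even_cos_const_mul]
  ring

theorem stmt_3 (j p : ℕ) :
    iteratedDeriv (2 * p) (fun x : ℝ => Real.cos x ^ (2 * j)) (Real.pi / 2) =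
      (-4 : ℝ) ^ ((p : ℤ) - (j : ℤ)) *
        ∑ k ∈ Finset.range (2 * j + 1),
          (-1 : ℝ) ^ k * (Nat.choose (2 * j) k : ℝ) *
            ((j : ℝ) - (k : ℝ)) ^ (2 * p) := by
  have hpow : (fun x : ℝ => cos x ^ (2 * j)) =
      fun x => ((4 : ℝ) ^ j)⁻¹ * (2 * cos x) ^ (2 * j) := by
    funext x
    rw [mul_pow, pow_mul (2 : ℝ)]
    norm_num
  have hcos (k : ℕ) : cos ((((2 * j : ℕ) : ℝ) - 2 * k) * (π / 2)) = (-1) ^ j * (-1) ^ k := by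
    rw [show (((2 * j : ℕ) : ℝ) - 2 * k) * (π / 2) = j * π - k * π by push_cast; ring,
      cos_sub, cos_nat_mul_pi, cos_nat_mul_pi, sin_nat_mul_pi, sin_nat_mul_pi]
    ring
  have hscale :
      (-4 : ℝ) ^ ((p : ℤ) - (j : ℤ)) = ((4 : ℝ) ^ j)⁻¹ * (-1) ^ p * 4 ^ p * (-1) ^ j := by
    rw [zpow_sub₀ (by norm_num), zpow_natCast, zpow_natCast, neg_pow, neg_pow (4 : ℝ),
      div_eq_mul_inv, mul_inv, ← inv_pow, inv_neg_one]
    ring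
  rw [hpow, iteratedDeriv_const_mul_field, iteratedDeriv_even_two_mul_cos_pow, hscale]
  simp only [hcos, mul_sum]
  refine sum_congr rfl fun k _ => ?_
  rw [show (((2 * j : ℕ) : ℝ) - 2 * k) ^ (2 * p) = 4 ^ p * ((j : ℝ) - k) ^ (2 * p) by
    rw [pow_mul, pow_mul, ← mul_pow]; push_cast; ring]
  ring
end

section
/- For every natural number n and every real γ with 0 ≤ γ ≤ 1, one has |∑_{j=0}^{n} (−1)^j · C(n,j) · C(n+j, j) · γ^j| ≤ 2, where C(n,k) denotes the binomial coefficient. -/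
/-!
The sum is the shifted Legendre polynomial `P̃ₙ(γ) = Pₙ(1 - 2γ)`, and in fact `|P̃ₙ(γ)| ≤ 1`.
Writing `P̃ₙ(x) = ∑ₖ C(n,k)² (-x)ᵏ (1 - x)ⁿ⁻ᵏ` exhibits it as `∑ₖ aₖ²` with
`aₖ = C(n,k) (i√x)ᵏ (√(1-x))ⁿ⁻ᵏ`, the coefficients of `p(w) = (i√x w + √(1-x))ⁿ`.
By orthogonality of the `(n+1)`-st roots of unity `ω`, this is the average of `p(ωᵐ) p(ω⁻ᵐ)`
over `m` (a discrete form of Laplace's integral for `Pₙ`), and for `|z| = 1`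
`|(i√x z + √(1-x))(i√x z⁻¹ + √(1-x))|² = (1 - 2x)² + 4x(1 - x)(Re z)² ≤ 1`.
-/

open Finset Complex ComplexConjugate

namespace Nat

theorem add_choose_eq_sum_choose_mul_choose (n j : ℕ) :
    (n + j).choose j = ∑ k ∈ range (j + 1), n.choose k * j.choose k := by
  rw [add_choose_eq, Finset.Nat.sum_antidiagonal_eq_sum_range_succ_mk]
  refine sum_congr rfl fun k hk => ?_
  rw [choose_symm (mem_range_succ_iff.mp hk)]

theorem sum_choose_sq_mul_choose_sub (n j : ℕ) :
    ∑ k ∈ range (j + 1), n.choose k ^ 2 * (n - k).choose (j - k) =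
      n.choose j * (n + j).choose j := by
  rw [add_choose_eq_sum_choose_mul_choose, mul_sum]
  refine sum_congr rfl fun k hk => ?_
  rw [sq, mul_assoc, ← choose_mul (mem_range_succ_iff.mp hk)]
  ring

end Nat

theorem sum_choose_sq_mul_pow_mul_one_add_pow {R : Type*} [CommRing R] (n : ℕ) (y : R) :
    ∑ k ∈ range (n + 1), (n.choose k ^ 2 : R) * y ^ k * (1 + y) ^ (n - k) =
      ∑ j ∈ range (n + 1), (n.choose j * (n + j).choose j : R) * y ^ j := by
  calc _ = ∑ k ∈ Ico 0 (n + 1), ∑ j ∈ Ico k (n + 1),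
        (n.choose k ^ 2 * (n - k).choose (j - k) : R) * y ^ j := by
        rw [← range_eq_Ico]
        refine sum_congr rfl fun k hk => ?_
        rw [sum_Ico_eq_sum_range, show n + 1 - k = n - k + 1 by grind, add_comm, add_pow,
          mul_sum]
        refine sum_congr rfl fun i _ => ?_
        rw [Nat.add_sub_cancel_left, pow_add]
        ring
    _ = ∑ j ∈ range (n + 1), ∑ k ∈ range (j + 1),
        (n.choose k ^ 2 * (n - k).choose (j - k) : R) * y ^ j := by
        rw [sum_Ico_Ico_comm, ← range_eq_Ico]
        simp only [← range_eq_Ico]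
    _ = _ := by
        refine sum_congr rfl fun j _ => ?_
        rw [← sum_mul]
        exact_mod_cast congrArg (fun m : ℕ => (m : R) * y ^ j)
          (Nat.sum_choose_sq_mul_choose_sub n j)

namespace IsPrimitiveRoot

variable {K : Type*} [Field K] {ω : K} {N : ℕ}

theorem sum_pow_div_pow_eq_ite (hω : IsPrimitiveRoot ω N) {k j : ℕ} (hk : k < N)
    (hj : j < N) :
    ∑ m ∈ range N, (ω ^ k / ω ^ j) ^ m = if k = j then (N : K) else 0 := by
  have hωj : ω ^ j ≠ 0 := pow_ne_zero j (hω.ne_zero (by omega))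
  split_ifs with hkj
  · simp [hkj, hωj]
  · have hζ : ω ^ k / ω ^ j ≠ 1 := by
      rw [Ne, div_eq_one_iff_eq hωj]
      exact fun h => hkj (hω.pow_inj hk hj h)
    have hζN : (ω ^ k / ω ^ j) ^ N = 1 := by
      rw [div_pow, ← pow_mul, ← pow_mul, mul_comm k, mul_comm j, pow_mul, pow_mul,
        hω.pow_eq_one, one_pow, one_pow, div_one]
    rw [geom_sum_eq hζ, hζN, sub_self, zero_div]

theorem sum_mul_sum_inv_eq (hω : IsPrimitiveRoot ω N) {n : ℕ} (hn : n ≤ N) (a b : ℕ → K) :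
    ∑ m ∈ range N, (∑ k ∈ range n, a k * (ω ^ m) ^ k) * (∑ j ∈ range n, b j * (ω ^ m)⁻¹ ^ j) =
      N * ∑ k ∈ range n, a k * b k := by
  simp_rw [sum_mul_sum, mul_sum]
  rw [sum_comm]
  refine sum_congr rfl fun k hk => ?_
  rw [sum_comm]
  have hkN : k < N := (mem_range.mp hk).trans_le hn
  calc _ = ∑ j ∈ range n, a k * b j * ∑ m ∈ range N, (ω ^ k / ω ^ j) ^ m := by
        refine sum_congr rfl fun j _ => ?_
        rw [mul_sum]
        refine sum_congr rfl fun m _ => ?_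
        rw [div_pow, inv_pow, ← pow_mul, ← pow_mul, ← pow_mul, ← pow_mul, mul_comm k, mul_comm j]
        ring
    _ = _ := by
        rw [sum_congr rfl fun j hj => by
          rw [hω.sum_pow_div_pow_eq_ite hkN ((mem_range.mp hj).trans_le hn)]]
        simp [hk, mul_comm]

end IsPrimitiveRoot

theorem Complex.norm_I_mul_add_mul_I_mul_inv_add_le_one {z : ℂ} (hz : ‖z‖ = 1) {u v : ℝ}
    (huv : u ^ 2 + v ^ 2 = 1) : ‖(I * u * z + v) * (I * u * z⁻¹ + v)‖ ≤ 1 := by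
  have hre : z.re ^ 2 ≤ 1 := by
    rw [sq_le_one_iff_abs_le_one, ← hz]
    exact abs_re_le_norm z
  have hprod : (I * u * z + v) * (I * u * z⁻¹ + v) =
      ((v ^ 2 - u ^ 2 : ℝ) : ℂ) + (2 * u * v * z.re : ℝ) * I := by
    have hzz : z * conj z = 1 := by rw [mul_conj, normSq_eq_norm_sq, hz]; norm_num
    have hzre : z + conj z = 2 * z.re := by exact_mod_cast add_conj z
    rw [inv_eq_conj hz]
    push_cast
    linear_combination (u ^ 2 * z * conj z : ℂ) * I_sq - (u ^ 2 : ℂ) * hzz + (I * u * v) * hzre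
  rw [hprod, norm_add_mul_I, Real.sqrt_le_one]
  nlinarith [mul_nonneg (sq_nonneg (u * v)) (sub_nonneg.mpr hre)]

namespace Polynomial

theorem aeval_shiftedLegendre {R : Type*} [CommRing R] (n : ℕ) (x : R) :
    aeval x (shiftedLegendre n) =
      ∑ j ∈ range (n + 1), (-1) ^ j * (n.choose j : R) * ((n + j).choose j : R) * x ^ j := by
  simp [shiftedLegendre, add_comm n, Nat.choose_symm_add]

theorem aeval_shiftedLegendre_eq_sum_choose_sq {R : Type*} [CommRing R] (n : ℕ) (x : R) :
    aeval x (shiftedLegendre n) =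
      ∑ k ∈ range (n + 1), (n.choose k ^ 2 : R) * (-x) ^ k * (1 - x) ^ (n - k) := by
  rw [sub_eq_add_neg, sum_choose_sq_mul_pow_mul_one_add_pow, aeval_shiftedLegendre]
  refine sum_congr rfl fun j _ => ?_
  rw [neg_pow]
  ring

theorem abs_aeval_shiftedLegendre_le_one (n : ℕ) {x : ℝ} (h0 : 0 ≤ x) (h1 : x ≤ 1) :
    |aeval x (shiftedLegendre n)| ≤ 1 := by
  rw [aeval_shiftedLegendre_eq_sum_choose_sq]
  set S := ∑ k ∈ range (n + 1), (n.choose k ^ 2 : ℝ) * (-x) ^ k * (1 - x) ^ (n - k) with hS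
  set u := √x
  set v := √(1 - x)
  set N := n + 1
  set ω := exp (2 * Real.pi * I / N)
  have hω : IsPrimitiveRoot ω N := isPrimitiveRoot_exp N n.succ_ne_zero
  let a : ℕ → ℂ := fun k => n.choose k * (I * u) ^ k * v ^ (n - k)
  have ha_sum : ∀ w : ℂ, ∑ k ∈ range N, a k * w ^ k = (I * u * w + v) ^ n := fun w => by
    rw [add_pow]
    refine sum_congr rfl fun k _ => ?_
    ring
  have ha_sq : ∑ k ∈ range N, a k * a k = S := by
    rw [hS]
    push_cast
    refine sum_congr rfl fun k _ => ?_
    have hu : (u : ℂ) ^ 2 = x := by exact_mod_cast Real.sq_sqrt h0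
    have hv : (v : ℂ) ^ 2 = 1 - x := by exact_mod_cast Real.sq_sqrt (sub_nonneg.mpr h1)
    simp only [a]
    rw [← hv, neg_eq_neg_one_mul, ← I_sq, ← hu]
    ring
  have hN :
      (N : ℂ) * S = ∑ m ∈ range N, ((I * u * ω ^ m + v) * (I * u * (ω ^ m)⁻¹ + v)) ^ n := by
    simp_rw [mul_pow, ← ha_sum]
    rw [hω.sum_mul_sum_inv_eq le_rfl a a, ha_sq]
  have huv : u ^ 2 + v ^ 2 = 1 := by
    rw [Real.sq_sqrt h0, Real.sq_sqrt (sub_nonneg.mpr h1)]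
    ring
  have hterm : ∀ m ∈ range N, ‖((I * u * ω ^ m + v) * (I * u * (ω ^ m)⁻¹ + v)) ^ n‖ ≤ 1 :=
    fun m _ => by
      rw [norm_pow]
      exact pow_le_one₀ (norm_nonneg _) <| norm_I_mul_add_mul_I_mul_inv_add_le_one
        (by rw [norm_pow, hω.norm'_eq_one n.succ_ne_zero, one_pow]) huv
  have hNS : (N : ℝ) * |S| ≤ N * 1 := by
    calc (N : ℝ) * |S| = ‖(N : ℂ) * S‖ := by simp
      _ ≤ ∑ m ∈ range N, 1 := hN ▸ norm_sum_le_of_le _ hterm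
      _ = N * 1 := by simp
  exact le_of_mul_le_mul_left hNS (by positivity)

end Polynomial

theorem stmt_8 (n : ℕ) (γ : ℝ) (h0 : 0 ≤ γ) (h1 : γ ≤ 1) :
    |∑ j ∈ Finset.range (n + 1),
        (-1 : ℝ) ^ j * (Nat.choose n j : ℝ) * (Nat.choose (n + j) j : ℝ) * γ ^ j|
      ≤ 2 := by
  rw [← Polynomial.aeval_shiftedLegendre]
  linarith [Polynomial.abs_aeval_shiftedLegendre_le_one n h0 h1]
end

section
/- For every natural number n and every real γ, the n-th derivative of the real function x ↦ (1+x)^n·(1+γx)^{−(n+1)} evaluated at x = 0 equals n! · ∑_{j=0}^{n} (−1)^j · C(n,j) · C(n+j, j) · γ^j, where C(n,k) denotes the binomial coefficient. -/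
/-!
Leibniz's rule splits the `n`-th derivative at `0` into `∑ₖ C(n,k) P⁽ᵏ⁾(0) G⁽ⁿ⁻ᵏ⁾(0)` with
`P x = (1 + x)ⁿ` and `G x = (1 + γx)^(-(n+1))`. Here `P⁽ᵏ⁾(0) = n!/(n-k)!` and
`G⁽ʲ⁾(0) = (-γ)ʲ (n+1)(n+2)⋯(n+j) = (-γ)ʲ j! C(n+j,j)`; putting `j = n - k`, the
`j`-th term is `n! (-1)ʲ C(n,j) C(n+j,j) γʲ`.
-/

open Finset Nat

section

variable {𝕜 E : Type*} [NontriviallyNormedField 𝕜] [NormedAddCommGroup E] [NormedSpace 𝕜 E]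

/-- Unlike `iteratedDeriv_comp_const_mul`, this needs no smoothness of `f`. -/
theorem iteratedDeriv_comp_mul_left (c : 𝕜) (f : 𝕜 → E) (k : ℕ) :
    iteratedDeriv k (fun x => f (c * x)) = fun x => c ^ k • iteratedDeriv k f (c * x) := by
  induction k with
  | zero => simp
  | succ k ih =>
    funext x
    rw [iteratedDeriv_succ, ih, deriv_fun_const_smul_field,
      deriv_comp_mul_left c (iteratedDeriv k f), iteratedDeriv_succ, smul_smul, pow_succ]

end

theorem prod_range_neg_natCast_sub {R : Type*} [CommRing R] (m j : ℕ) :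
    ∏ i ∈ range j, (-(m : R) - i) = (-1) ^ j * (m.ascFactorial j : ℕ) := by
  have h := prod_neg (s := range j) fun i => ((m + i : ℕ) : R)
  rw [card_range] at h
  rw [ascFactorial_eq_prod_range, Nat.cast_prod, ← h]
  refine prod_congr rfl fun i _ => ?_
  push_cast
  ring

section

variable {𝕜 : Type*} [NontriviallyNormedField 𝕜]

theorem iteratedDeriv_one_add_pow_zero (n k : ℕ) :
    iteratedDeriv k (fun x : 𝕜 => (1 + x) ^ n) 0 = n.descFactorial k := by
  rw [iteratedDeriv_comp_const_add k (· ^ n) 1]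
  simp

theorem iteratedDeriv_one_add_mul_zpow_zero (c : 𝕜) (m : ℤ) (k : ℕ) :
    iteratedDeriv k (fun x : 𝕜 => (1 + c * x) ^ m) 0 = c ^ k * ∏ i ∈ range k, ((m : 𝕜) - i) := by
  rw [iteratedDeriv_comp_mul_left c (fun y => (1 + y) ^ m),
    iteratedDeriv_comp_const_add k (· ^ m) 1, iteratedDeriv_eq_iterate]
  simp [iter_deriv_zpow]

theorem iteratedDeriv_inv_one_add_mul_pow_zero (c : 𝕜) (n j : ℕ) :
    iteratedDeriv j (fun x : 𝕜 => ((1 + c * x) ^ (n + 1))⁻¹) 0 =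
      (-c) ^ j * (j ! * (n + j).choose j : ℕ) := by
  have h := iteratedDeriv_one_add_mul_zpow_zero c (-((n + 1 : ℕ) : ℤ)) j
  simp only [zpow_neg, zpow_natCast, Int.cast_neg, Int.cast_natCast,
    prod_range_neg_natCast_sub, ascFactorial_eq_factorial_mul_choose] at h
  rw [h, neg_pow]
  ring

end

theorem stmt_10 (n : ℕ) (γ : ℝ) :
    iteratedDeriv n (fun x : ℝ => (1 + x) ^ n / (1 + γ * x) ^ (n + 1)) 0 =
      (n ! : ℝ) *
        ∑ j ∈ Finset.range (n + 1),
          (-1 : ℝ) ^ j * (Nat.choose n j : ℝ) * (Nat.choose (n + j) j : ℝ) *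
            γ ^ j := by
  have hP : ContDiffAt ℝ n (fun x : ℝ => (1 + x) ^ n) 0 := by fun_prop
  have hG : ContDiffAt ℝ n (fun x : ℝ => ((1 + γ * x) ^ (n + 1))⁻¹) 0 :=
    (by fun_prop : ContDiffAt ℝ n (fun x : ℝ => (1 + γ * x) ^ (n + 1)) 0).inv (by simp)
  simp only [div_eq_mul_inv]
  rw [iteratedDeriv_fun_mul hP hG, ← sum_range_reflect, mul_sum]
  refine sum_congr rfl fun j hj => ?_
  have hjn : j ≤ n := Nat.lt_succ_iff.mp (mem_range.mp hj)
  rw [iteratedDeriv_one_add_pow_zero, iteratedDeriv_inv_one_add_mul_pow_zero, Nat.add_sub_cancel,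
    Nat.sub_sub_self hjn, choose_symm hjn, descFactorial_eq_factorial_mul_choose, choose_symm hjn,
    ← choose_mul_factorial_mul_factorial hjn]
  push_cast
  ring
end

section
/- Let t, q, r be natural numbers with q ≥ t ≥ 2 and r ≥ q + 2q². Then (r−1−q+t)! · q! / ((r−t−1)! · (t!)²) ≤ (q/(r−1−q))^{q−t} · C(r−1, t), as an inequality of real numbers, where C(n,k) denotes the binomial coefficient. -/
/-!
Write `n = r - 1`, `m = n - q` and `d = q - t`. After clearing denominators the inequality becomes
`(m + t)! * q! * m ^ d ≤ n! * t! * q ^ d`, the product of two factorial estimates: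
`q! ≤ t! * q ^ d`, since the `d` factors of `q!` above `t` are at most `q`, and
`(m + t)! * m ^ d ≤ (m + t + d)! = n!`, since the `d` factors of `n!` above `m + t` are at least `m`.
-/

open Nat

theorem Nat.factorial_le_factorial_mul_pow_sub {t q : ℕ} (h : t ≤ q) : q ! ≤ t ! * q ^ (q - t) := by
  rw [← factorial_mul_descFactorial (Nat.sub_le q t), Nat.sub_sub_self h]
  exact Nat.mul_le_mul_left _ (descFactorial_le_pow q (q - t))

theorem Nat.factorial_mul_pow_le_factorial_of_le {a b c : ℕ} (hab : a ≤ b) (hca : c ≤ a) :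
    a ! * c ^ (b - a) ≤ b ! :=
  (Nat.mul_le_mul_left _ (Nat.pow_le_pow_left hca _)).trans (factorial_mul_pow_sub_le_factorial hab)

theorem Nat.factorial_mul_factorial_mul_pow_le {t q n : ℕ} (htq : t ≤ q) (hqn : q ≤ n) :
    (n - q + t)! * q ! * (n - q) ^ (q - t) ≤ n ! * t ! * q ^ (q - t) := by
  have hpow : (n - q + t)! * (n - q) ^ (q - t) ≤ n ! := by
    simpa [show n - (n - q + t) = q - t by omega] using
      factorial_mul_pow_le_factorial_of_le (a := n - q + t) (b := n) (c := n - q) (by omega) (by omega)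
  calc (n - q + t)! * q ! * (n - q) ^ (q - t) = (n - q + t)! * (n - q) ^ (q - t) * q ! := by ring
    _ ≤ n ! * (t ! * q ^ (q - t)) :=
      Nat.mul_le_mul hpow (factorial_le_factorial_mul_pow_sub htq)
    _ = n ! * t ! * q ^ (q - t) := by ring

theorem factorial_div_factorial_mul_sq_le {t q n : ℕ} (htq : t ≤ q) (hqn : q < n) :
    ((n - q + t)! : ℝ) * q ! / ((n - t)! * (t ! : ℝ) ^ 2)
      ≤ ((q : ℝ) / (n - q : ℕ)) ^ (q - t) * n.choose t := by
  have hnq_pos : (0 : ℝ) < (n - q : ℕ) := by exact_mod_cast Nat.sub_pos_of_lt hqn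
  rw [cast_choose ℝ (by omega : t ≤ n), div_pow, div_mul_div_comm (α := ℝ),
    div_le_div_iff₀ (by positivity) (by positivity)]
  have key : ((n - q + t)! * q ! * (n - q : ℕ) ^ (q - t) : ℝ) ≤ n ! * t ! * (q : ℝ) ^ (q - t) := by
    exact_mod_cast factorial_mul_factorial_mul_pow_le htq hqn.le
  calc ((n - q + t)! * q ! : ℝ) * ((n - q : ℕ) ^ (q - t) * (t ! * (n - t)!))
      = ((n - q + t)! * q ! * (n - q : ℕ) ^ (q - t) : ℝ) * (t ! * (n - t)!) := by ring
    _ ≤ (n ! * t ! * (q : ℝ) ^ (q - t)) * (t ! * (n - t)!) := by gcongr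
    _ = (q : ℝ) ^ (q - t) * n ! * ((n - t)! * (t ! : ℝ) ^ 2) := by ring

theorem stmt_11 (t q r : ℕ) (htq : t ≤ q) (ht : 2 ≤ t)
    (hr : q + 2 * q ^ 2 ≤ r) :
    ((r - 1 - q + t)! : ℝ) * (q ! : ℝ) / (((r - t - 1)! : ℝ) * ((t ! : ℝ)) ^ 2)
      ≤ ((q : ℝ) / ((r : ℝ) - 1 - (q : ℝ))) ^ (q - t) *
        (Nat.choose (r - 1) t : ℝ) := by
  have hqr : q < r - 1 := by
    have : q ≤ q ^ 2 := Nat.le_self_pow two_ne_zero q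
    omega
  have hcast : ((r - 1 - q : ℕ) : ℝ) = (r : ℝ) - 1 - q := by
    rw [Nat.cast_sub hqr.le, Nat.cast_sub (by omega)]
    simp
  rw [← hcast, show r - t - 1 = r - 1 - t by omega]
  exact factorial_div_factorial_mul_sq_le htq hqr
end

section
/- Let t, k, r be natural numbers with t ≤ k and t + 1 ≤ r. In the ring of formal power series in two variables x, y over ℝ, the elements (1 + x·y)^{t+1} and (1 − x)^{r−t} are invertible (having constant term 1), and the coefficient of the monomial x^t·y^k in the power series (1+y)^k · ((1+x·y)^{t+1})^{−1} · ((1−x)^{r−t})^{−1} equals A(t,k,r) = ∑_{j=0}^{min(k,t)} (−1)^j · C(k,j) · C(j+t, j) · C(r−j−1, r−t−1), where C(n,k) denotes the binomial coefficient. -/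
/-!
The two inverses are images of `PowerSeries.invOneSubPow` under substitution:
`(1 + x y)^{-(t+1)} = ∑ₙ (-1)ⁿ C(t+n, t) (x y)ⁿ` and `(1 - x)^{-(s+1)} = ∑ₘ C(s+m, s) xᵐ`
with `s = r - t - 1`. In the coefficient of `xᵗ yᵏ` of the product with `(1 + y)ᵏ`, the term
`(x y)ʲ` must be paired with `x^{t-j}` and `y^{k-j}`, which yields the `j`-th summand, since
`s + (t - j) = r - j - 1`.
-/

open Finset MvPowerSeries

theorem Ring.inverse_eq_of_mul_eq_one {M₀ : Type*} [CommMonoidWithZero M₀] {a b : M₀}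
    (h : a * b = 1) : Ring.inverse a = b := by
  rw [← Ring.inverse_mul_cancel_left a b (.of_mul_eq_one b h), h, mul_one]

namespace Finsupp

variable {ι M : Type*} [AddZeroClass M] {i j : ι}

theorem single_add_single_inj (hij : i ≠ j) {a b c d : M} :
    single i a + single j b = single i c + single j d ↔ a = c ∧ b = d := by
  classical
  refine ⟨fun h ↦ ⟨?_, ?_⟩, fun ⟨hac, hbd⟩ ↦ hac ▸ hbd ▸ rfl⟩
  · simpa [hij] using DFunLike.congr_fun h i
  · simpa [hij.symm] using DFunLike.congr_fun h j

theorem update_single_add_single_left (hij : i ≠ j) (a b c : M) :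
    (single i a + single j b).update i c = single i c + single j b := by
  classical
  ext l
  by_cases hl : l = i <;> simp [update_apply, single_apply, hl, hij]

theorem update_single_add_single_right (hij : i ≠ j) (a b c : M) :
    (single i a + single j b).update j c = single i a + single j c := by
  classical
  ext l
  by_cases hl : l = j <;> simp [update_apply, single_apply, hl, hij.symm]

end Finsupp

namespace PowerSeries

variable {σ R : Type*} [CommRing R]

theorem coeff_one_add_X_pow (k n : ℕ) : coeff n ((1 + X : R⟦X⟧) ^ k) = k.choose n := by
  rw [← Polynomial.coe_X, ← Polynomial.coe_one, ← Polynomial.coe_add, ← Polynomial.coe_pow,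
    Polynomial.coeff_coe, Polynomial.coeff_one_add_X_pow]

theorem one_sub_pow_mul_subst_mk_choose {a : MvPowerSeries σ R} (ha : HasSubst a) (d : ℕ) :
    (1 - a) ^ (d + 1) * subst a (mk fun n ↦ ((d + n).choose d : R)) = 1 := by
  have := congrArg (substAlgHom ha) (mk_add_choose_mul_one_sub_pow_eq_one (S := R) (d := d))
  rwa [map_mul, map_pow, map_sub, map_one, substAlgHom_X, mul_comm, coe_substAlgHom] at this

end PowerSeries

namespace MvPowerSeries

variable {σ R : Type*} [CommRing R]

theorem coeff_subst_X_mul (i : σ) (f : PowerSeries R) (g : MvPowerSeries σ R) (d : σ →₀ ℕ) :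
    coeff d (PowerSeries.subst (X i) f * g) =
      ∑ p ∈ antidiagonal (d i), PowerSeries.coeff p.1 f * coeff (d.update i p.2) g := by
  classical
  rw [coeff_mul]
  symm
  refine sum_of_injOn (fun p ↦ (Finsupp.single i p.1, d.update i p.2)) ?_ ?_ ?_ ?_
  · rintro ⟨a, b⟩ - ⟨a', b'⟩ - h
    simp only [Prod.mk.injEq] at h
    have hb := DFunLike.congr_fun h.2 i
    simp only [Finsupp.update_apply, if_true] at hb
    rw [Finsupp.single_injective i h.1, hb]
  · rintro ⟨a, b⟩ h
    simp only [SetLike.mem_coe, HasAntidiagonal.mem_antidiagonal] at h ⊢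
    ext j
    by_cases hj : j = i
    · subst hj
      simpa using h
    · simp [hj]
  · rintro ⟨q₁, q₂⟩ hq hne
    have hq' (j : σ) : q₁ j + q₂ j = d j := by
      simpa using DFunLike.congr_fun (HasAntidiagonal.mem_antidiagonal.mp hq) j
    rw [PowerSeries.coeff_subst_single, if_neg, zero_mul]
    intro h1
    refine hne ⟨(q₁ i, q₂ i), by simpa using hq' i, Prod.ext h1.symm (Finsupp.ext fun j ↦ ?_)⟩
    by_cases hj : j = i
    · simp [hj]
    · have hq₁ : q₁ j = 0 := by simpa [Ne.symm hj] using DFunLike.congr_fun h1 j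
      simpa [hj, hq₁] using (hq' j).symm
  · rintro ⟨a, b⟩ h
    simp [PowerSeries.coeff_subst_single]

theorem coeff_subst_neg_X_mul_X {i j : σ} (hij : i ≠ j) (f : PowerSeries R) (a b : ℕ) :
    coeff (Finsupp.single i a + Finsupp.single j b)
        (PowerSeries.subst (-(X i * X j)) f) =
      if a = b then (-1) ^ a * PowerSeries.coeff a f else 0 := by
  classical
  have hpow (m : ℕ) : (-(X i * X j) : MvPowerSeries σ R) ^ m =
      monomial (Finsupp.single i m + Finsupp.single j m) ((-1) ^ m) := by
    rw [X_def, X_def, monomial_mul_monomial, one_mul, ← map_neg, monomial_pow]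
    simp
  rw [PowerSeries.coeff_subst (.of_constantCoeff_zero (by simp))]
  simp_rw [hpow, coeff_monomial, Finsupp.single_add_single_inj hij]
  split_ifs with hab
  · subst hab
    rw [finsum_eq_single _ a (fun m hm ↦ by simp [Ne.symm hm])]
    simp [mul_comm]
  · exact finsum_eq_zero_of_forall_eq_zero fun m ↦ by rw [if_neg (by omega), smul_zero]

theorem coeff_one_add_X_pow_mul_subst_neg_X_mul_X {i j : σ} (hij : i ≠ j) (f : PowerSeries R)
    {a k : ℕ} (hak : a ≤ k) :
    coeff (Finsupp.single i a + Finsupp.single j k)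
        ((1 + X j) ^ k * PowerSeries.subst (-(X i * X j)) f) =
      (-1) ^ a * k.choose a * PowerSeries.coeff a f := by
  have hP : (1 + X j : MvPowerSeries σ R) ^ k =
      PowerSeries.subst (X j) ((1 + PowerSeries.X : PowerSeries R) ^ k) := by
    rw [PowerSeries.subst_pow (.X j), PowerSeries.subst_add (.X j), PowerSeries.subst_X (.X j),
      ← map_one (PowerSeries.C (R := R)), PowerSeries.subst_C, map_one]
  have hkj : (Finsupp.single i a + Finsupp.single j k) j = k := by simp [hij]
  rw [hP, coeff_subst_X_mul, hkj, sum_eq_single (k - a, a)]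
  · rw [Finsupp.update_single_add_single_right hij, coeff_subst_neg_X_mul_X hij, if_pos rfl,
      PowerSeries.coeff_one_add_X_pow, Nat.choose_symm hak]
    ring
  · rintro ⟨p₁, p₂⟩ hp hne
    have hap : a ≠ p₂ := by
      rintro rfl
      rw [HasAntidiagonal.mem_antidiagonal] at hp
      exact hne (Prod.ext (by simp; omega) rfl)
    rw [Finsupp.update_single_add_single_right hij, coeff_subst_neg_X_mul_X hij, if_neg hap,
      mul_zero]
  · simp [hak]

theorem coeff_one_add_X_pow_mul_subst_mul_subst {i j : σ} (hij : i ≠ j) (f g : PowerSeries R)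
    {t k : ℕ} (htk : t ≤ k) :
    coeff (Finsupp.single i t + Finsupp.single j k)
        ((1 + X j) ^ k * PowerSeries.subst (-(X i * X j)) f * PowerSeries.subst (X i) g) =
      ∑ m ∈ range (t + 1),
        (-1) ^ m * k.choose m * PowerSeries.coeff m f * PowerSeries.coeff (t - m) g := by
  have hti : (Finsupp.single i t + Finsupp.single j k) i = t := by simp [hij.symm]
  rw [mul_comm, coeff_subst_X_mul, hti, ← Nat.sum_antidiagonal_swap,
    Nat.sum_antidiagonal_eq_sum_range_succ_mk]
  refine sum_congr rfl fun m hm ↦ ?_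
  rw [Prod.swap_prod_mk, Finsupp.update_single_add_single_left hij,
    coeff_one_add_X_pow_mul_subst_neg_X_mul_X hij f ((mem_range_succ_iff.mp hm).trans htk)]
  ring

end MvPowerSeries

theorem stmt_14 (t k r : ℕ) (htk : t ≤ k) (htr : t + 1 ≤ r)
    (x y : MvPowerSeries (Fin 2) ℝ)
    (hx : x = MvPowerSeries.X 0) (hy : y = MvPowerSeries.X 1) :
    IsUnit ((1 + x * y) ^ (t + 1)) ∧ IsUnit ((1 - x) ^ (r - t)) ∧
      MvPowerSeries.coeff (Finsupp.single (0 : Fin 2) t + Finsupp.single (1 : Fin 2) k)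
          ((1 + y) ^ k * Ring.inverse ((1 + x * y) ^ (t + 1)) *
            Ring.inverse ((1 - x) ^ (r - t)))
        = ∑ j ∈ Finset.range (min k t + 1),
            (-1 : ℝ) ^ j * (Nat.choose k j : ℝ) * (Nat.choose (j + t) j : ℝ) *
              (Nat.choose (r - j - 1) (r - t - 1) : ℝ) := by
  subst hx hy
  have hA := PowerSeries.one_sub_pow_mul_subst_mk_choose
    (.of_constantCoeff_zero (a := -(X 0 * X 1 : MvPowerSeries (Fin 2) ℝ)) (by simp)) t
  rw [sub_neg_eq_add] at hA
  have hB := PowerSeries.one_sub_pow_mul_subst_mk_choose (R := ℝ) (.X (0 : Fin 2)) (r - t - 1)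
  rw [show r - t - 1 + 1 = r - t by omega] at hB
  refine ⟨.of_mul_eq_one _ hA, .of_mul_eq_one _ hB, ?_⟩
  rw [Ring.inverse_eq_of_mul_eq_one hA, Ring.inverse_eq_of_mul_eq_one hB,
    coeff_one_add_X_pow_mul_subst_mul_subst (by decide) _ _ htk, min_eq_right htk]
  refine sum_congr rfl fun j hj ↦ ?_
  rw [PowerSeries.coeff_mk, PowerSeries.coeff_mk, Nat.choose_symm_add, add_comm t j,
    show r - t - 1 + (t - j) = r - j - 1 by have := mem_range_succ_iff.mp hj; omega]
end

section
/- Let α and p be natural numbers. If p < α, then the 2p-th derivative of the function x ↦ (cos x)^{2α} evaluated at x = π/2 equals 0; and if p = α, this 2p-th derivative at x = π/2 equals (2α)!. -/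
/-!
If `f a = 0`, then for `n ≤ k` the `n`-th derivative of `f ^ k` is still `f ^ (k - n)` times a
smooth cofactor. Differentiating once more, only the term where `f'` hits the power of `f`
survives at `a`, so the cofactor at `a` gains a factor `(k - n) * f' a` at each step. Hence the
derivatives of order `n < k` vanish at `a` and the `k`-th one is `k! * f' a ^ k`. For
`f = cos`, `a = π / 2` and `k = 2α` we have `f' a = -1`, and `(-1) ^ (2α) = 1`.
-/

open Nat
open scoped ContDiff

section

variable {𝕜 : Type*} [NontriviallyNormedField 𝕜] {f : 𝕜 → 𝕜} {a : 𝕜} {k : ℕ}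

theorem exists_iteratedDeriv_pow_eq_pow_mul (hf : ContDiff 𝕜 ∞ f) (ha : f a = 0) :
    ∀ n ≤ k, ∃ h : 𝕜 → 𝕜, ContDiff 𝕜 ∞ h ∧ h a = k.descFactorial n * deriv f a ^ n ∧
      iteratedDeriv n (fun x => f x ^ k) = fun x => f x ^ (k - n) * h x := by
  intro n
  induction n with
  | zero => exact fun _ => ⟨fun _ => 1, contDiff_const, by simp, by simp⟩
  | succ n ih =>
    intro hn
    obtain ⟨h, hh, hha, hderiv⟩ := ih (by omega)
    have hf' : ContDiff 𝕜 ∞ (deriv f) := (contDiff_infty_iff_deriv.mp hf).2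
    have hh' : ContDiff 𝕜 ∞ (deriv h) := (contDiff_infty_iff_deriv.mp hh).2
    refine ⟨fun x => (k - n : ℕ) * deriv f x * h x + f x * deriv h x,
      ((contDiff_const.mul hf').mul hh).add (hf.mul hh'), ?_, ?_⟩
    · simp only [ha, hha, zero_mul, add_zero, Nat.descFactorial_succ, pow_succ]
      push_cast
      ring
    · rw [iteratedDeriv_succ, hderiv]
      funext x
      have hprod : HasDerivAt (fun x => f x ^ (k - n) * h x)
          ((k - n : ℕ) * f x ^ (k - n - 1) * deriv f x * h x + f x ^ (k - n) * deriv h x) x :=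
        ((hf.differentiable (by simp) x).hasDerivAt.pow (k - n)).mul
          (hh.differentiable (by simp) x).hasDerivAt
      rw [hprod.deriv, show k - n = k - (n + 1) + 1 by omega]
      simp only [Nat.add_sub_cancel]
      push_cast
      ring

theorem iteratedDeriv_pow_eq_zero_of_lt (hf : ContDiff 𝕜 ∞ f) (ha : f a = 0) {n : ℕ}
    (hn : n < k) : iteratedDeriv n (fun x => f x ^ k) a = 0 := by
  obtain ⟨h, -, -, hderiv⟩ := exists_iteratedDeriv_pow_eq_pow_mul hf ha n hn.le
  simp [hderiv, ha, Nat.sub_ne_zero_of_lt hn]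

theorem iteratedDeriv_pow_self (hf : ContDiff 𝕜 ∞ f) (ha : f a = 0) :
    iteratedDeriv k (fun x => f x ^ k) a = k ! * deriv f a ^ k := by
  obtain ⟨h, -, hha, hderiv⟩ := exists_iteratedDeriv_pow_eq_pow_mul hf ha k le_rfl
  simp [hderiv, hha, Nat.descFactorial_self]

end

open Real

theorem stmt_15 (α p : ℕ) :
    (p < α →
      iteratedDeriv (2 * p) (fun x : ℝ => Real.cos x ^ (2 * α)) (Real.pi / 2) = 0) ∧
    (p = α →
      iteratedDeriv (2 * p) (fun x : ℝ => Real.cos x ^ (2 * α)) (Real.pi / 2)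
        = ((2 * α)! : ℝ)) := by
  refine ⟨fun hp => iteratedDeriv_pow_eq_zero_of_lt contDiff_cos cos_pi_div_two (by omega),
    fun hp => ?_⟩
  rw [hp, iteratedDeriv_pow_self contDiff_cos cos_pi_div_two, Real.deriv_cos, sin_pi_div_two,
    pow_mul]
  norm_num
end
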